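/- Let A be a finite alphabet, let θ ∈ (0, 2), and let L ⊆ A* be a language such that Isom_θ(L) acts transitively on L (i.e., for all u, v ∈ L there exists φ ∈ Isom_θ(L) with φ(u) = v). Then L is finite. -/

import Mathlib

/-!
Fix `u₀ ∈ L` and put `n = |u₀|`. Comparing lengths gives, for all words `a`, `b`,
`lev(u₀,a) + lev(u₀,b) - lev(a,b) ≥ (2 - θ) · min(lev(u₀,a), lev(u₀,b)) - 4n`:
for `θ < 2` the triangle inequality at `u₀` has a defect growing linearly with the distances.
Transitivity of the isometry group moves this bound to every base point `v ∈ L`.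
If `L` were infinite, Higman's lemma would give a chain `u ⊑ v ⊑ w` of subwords in `L` with
large length gaps; along a chain of subwords `lev` is the length difference, so the defect at
`v` vanishes, contradicting the bound.
-/

/-- A cost function for Levenshtein distance (formerly in Mathlib,
`Mathlib/Data/List/EditDistance/Defs.lean`, reproduced with its old meaning). -/
structure Levenshtein.Cost (α β δ : Type*) where
  delete : α → δ
  insert : β → δ
  substitute : α → β → δ

/-- Helper for the Levenshtein dynamic program (formerly in Mathlib). -/
def Levenshtein.impl {α β δ : Type*} [AddZeroClass δ] [Min δ]
    (C : Levenshtein.Cost α β δ)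
    (xs : List α) (y : β) (d : {r : List δ // 0 < r.length}) :
    {r : List δ // 0 < r.length} :=
  let ⟨ds, w⟩ := d
  xs.zip (ds.zip ds.tail) |>.foldr
    (init := ⟨[C.insert y + ds.getLast (List.length_pos_iff.mp w)], by simp⟩)
    (fun ⟨x, d₀, d₁⟩ ⟨r, w⟩ =>
      ⟨min (C.delete x + r[0]) (min (C.insert y + d₀) (C.substitute x y + d₁)) :: r, by simp⟩)

/-- Levenshtein distances from all suffixes of `xs` to `ys` (formerly in Mathlib). -/
def suffixLevenshtein {α β δ : Type*} [AddZeroClass δ] [Min δ]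
    (C : Levenshtein.Cost α β δ) (xs : List α) (ys : List β) :
    {r : List δ // 0 < r.length} :=
  ys.foldr
    (Levenshtein.impl C xs)
    (xs.foldr (init := ⟨[0], by simp⟩) (fun a ⟨r, w⟩ => ⟨(C.delete a + r[0]) :: r, by simp⟩))

/-- The Levenshtein distance with cost function `C` (formerly in Mathlib). -/
def levenshtein {α β δ : Type*} [AddZeroClass δ] [Min δ]
    (C : Levenshtein.Cost α β δ) (xs : List α) (ys : List β) : δ :=
  let ⟨r, w⟩ := suffixLevenshtein C xs ys
  r[0]

/-- Cost structure for the generalized Levenshtein distance: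
insertions and deletions cost `γ`, substitutions cost `θ`. -/
def levCost (A : Type*) [DecidableEq A] (γ θ : ℝ) : Levenshtein.Cost A A ℝ where
  delete _ := γ
  insert _ := γ
  substitute a b := if a = b then 0 else θ

/-- The generalized Levenshtein distance `lev_{γ,θ}` between two words over `A`:
the minimal total cost of transforming one word into the other by insertions and
deletions (of cost `γ`) and substitutions (of cost `θ`). -/
def lev {A : Type*} [DecidableEq A] (γ θ : ℝ) (u v : List A) : ℝ :=
  levenshtein (levCost A γ θ) u v

/-- The isometry group of a language `L ⊆ A*` with respect to a distance `d` on `A*`: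
the group (under composition) of bijections of `L` preserving `d`. -/
def IsomGroup {A : Type*} (d : List A → List A → ℝ) (L : Set (List A)) :
    Subgroup (Equiv.Perm L) where
  carrier := {φ : Equiv.Perm L | ∀ u v : L, d (φ u) (φ v) = d u v}
  one_mem' := by intro u v; rfl
  mul_mem' := by intro φ ψ hφ hψ u v; simp only [Equiv.Perm.mul_apply]; rw [hφ, hψ]
  inv_mem' := by
    intro φ hφ u v
    have h := hφ (φ⁻¹ u) (φ⁻¹ v)
    simpa using h.symm

section Recurrence

theorem Levenshtein.ext_of_head_of_tail {δ : Type*} {x y : {r : List δ // 0 < r.length}}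
    (head : x.1[0]'x.2 = y.1[0]'y.2) (tail : x.1.tail = y.1.tail) : x = y := by
  obtain ⟨_ | ⟨a, l⟩, hx⟩ := x
  · simp at hx
  obtain ⟨_ | ⟨b, m⟩, hy⟩ := y
  · simp at hy
  simp_all

variable {α β δ : Type*} [AddZeroClass δ] [Min δ] (C : Levenshtein.Cost α β δ)

namespace Levenshtein

theorem impl_cons_get_zero (x : α) (xs : List α) (y : β) (d : δ) (ds : List δ) (w)
    (w' : 0 < ds.length) :
    (impl C (x :: xs) y ⟨d :: ds, w⟩).1[0]'(by cases ds <;> simp [impl] at w' ⊢) =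
      min (C.delete x + (impl C xs y ⟨ds, w'⟩).1[0]'(impl C xs y ⟨ds, w'⟩).2)
        (min (C.insert y + d) (C.substitute x y + ds[0])) :=
  match ds, w' with | _ :: _, _ => rfl

theorem impl_length (xs : List α) (y : β) (d : {r : List δ // 0 < r.length})
    (w : d.1.length = xs.length + 1) :
    (impl C xs y d).1.length = xs.length + 1 := by
  induction xs generalizing d with
  | nil => rfl
  | cons x xs ih =>
    match d, w with
    | ⟨_ :: d₂ :: ds, _⟩, w =>
      dsimp [impl]
      congr 1
      exact ih ⟨d₂ :: ds, by simp⟩ (by simpa using w)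

end Levenshtein

open Levenshtein

theorem suffixLevenshtein_length (xs : List α) (ys : List β) :
    (suffixLevenshtein C xs ys).1.length = xs.length + 1 := by
  induction ys with
  | nil =>
    induction xs with
    | nil => rfl
    | cons _ xs ih => simp_all [suffixLevenshtein]
  | cons y ys ih => exact impl_length C xs y _ ih

theorem suffixLevenshtein_cons_left (x : α) (xs : List α) (ys : List β) :
    suffixLevenshtein C (x :: xs) ys =
      ⟨levenshtein C (x :: xs) ys :: (suffixLevenshtein C xs ys).1, by simp⟩ := by
  induction ys with
  | nil => rfl
  | cons y ys ih =>
    refine ext_of_head_of_tail rfl ?_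
    show (impl C (x :: xs) y (suffixLevenshtein C (x :: xs) ys)).1.tail =
      (impl C xs y (suffixLevenshtein C xs ys)).1
    rw [ih]
    generalize suffixLevenshtein C xs ys = s
    obtain ⟨_ | ⟨d, ds⟩, hs⟩ := s
    · simp at hs
    · rfl

theorem levenshtein_nil_nil : levenshtein C ([] : List α) ([] : List β) = 0 := rfl

theorem levenshtein_nil_cons (y : β) (ys : List β) :
    levenshtein C ([] : List α) (y :: ys) = C.insert y + levenshtein C [] ys := by
  suffices ∀ s : {r : List δ // 0 < r.length}, s.1.length = 1 →
      (impl C ([] : List α) y s).1[0]'(impl C [] y s).2 = C.insert y + s.1[0]'s.2 from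
    this _ (suffixLevenshtein_length C [] ys)
  rintro ⟨_ | ⟨d, _ | ⟨e, l⟩⟩, h⟩ hs
  · simp at h
  · rfl
  · simp at hs

theorem levenshtein_cons_nil (x : α) (xs : List α) :
    levenshtein C (x :: xs) ([] : List β) = C.delete x + levenshtein C xs [] := rfl

theorem levenshtein_cons_cons (x : α) (xs : List α) (y : β) (ys : List β) :
    levenshtein C (x :: xs) (y :: ys) =
      min (C.delete x + levenshtein C xs (y :: ys))
        (min (C.insert y + levenshtein C (x :: xs) ys)
          (C.substitute x y + levenshtein C xs ys)) := by
  show (impl C (x :: xs) y (suffixLevenshtein C (x :: xs) ys)).1[0]'(by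
      rw [impl_length _ _ _ _ (suffixLevenshtein_length C _ _)]; simp) = _
  simp only [suffixLevenshtein_cons_left]
  rw [impl_cons_get_zero]
  rfl

end Recurrence

section Lev

variable {A : Type*} [DecidableEq A] {γ θ : ℝ}

theorem lev_nil_left : ∀ v : List A, lev γ θ [] v = γ * v.length
  | [] => by simp [lev, levenshtein_nil_nil]
  | y :: ys => by
    rw [lev, levenshtein_nil_cons, ← lev, lev_nil_left ys]
    simp only [levCost, List.length_cons]
    push_cast
    ring

theorem lev_nil_right : ∀ u : List A, lev γ θ u [] = γ * u.length
  | [] => by simp [lev, levenshtein_nil_nil]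
  | x :: xs => by
    rw [lev, levenshtein_cons_nil, ← lev, lev_nil_right xs]
    simp only [levCost, List.length_cons]
    push_cast
    ring

theorem lev_cons_cons (x y : A) (xs ys : List A) :
    lev γ θ (x :: xs) (y :: ys) =
      min (γ + lev γ θ xs (y :: ys))
        (min (γ + lev γ θ (x :: xs) ys) ((if x = y then 0 else θ) + lev γ θ xs ys)) :=
  levenshtein_cons_cons _ x xs y ys

theorem lev_comm : ∀ u v : List A, lev γ θ u v = lev γ θ v u
  | [], v => by rw [lev_nil_left, lev_nil_right]
  | x :: xs, [] => by rw [lev_nil_left, lev_nil_right]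
  | x :: xs, y :: ys => by
    rw [lev_cons_cons, lev_cons_cons, lev_comm xs, lev_comm xs, lev_comm (x :: xs) ys,
      min_left_comm]
    simp only [eq_comm (a := x)]

theorem lev_le_length_add_length : ∀ u v : List A, lev γ θ u v ≤ γ * (u.length + v.length)
  | [], v => by simp [lev_nil_left]
  | x :: xs, [] => by simp [lev_nil_right]
  | x :: xs, y :: ys => by
    rw [lev_cons_cons]
    refine (min_le_left _ _).trans ?_
    have := lev_le_length_add_length xs (y :: ys)
    simp only [List.length_cons] at this ⊢
    push_cast at this ⊢
    linarith

theorem length_sub_length_le_lev (hγ : 0 ≤ γ) (hθ : 0 ≤ θ) :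
    ∀ u v : List A, γ * ((v.length : ℝ) - u.length) ≤ lev γ θ u v
  | [], v => by simp [lev_nil_left]
  | x :: xs, [] => by
    rw [lev_nil_right]
    simp only [List.length_cons, List.length_nil]
    push_cast
    nlinarith
  | x :: xs, y :: ys => by
    have h₁ := length_sub_length_le_lev hγ hθ xs (y :: ys)
    have h₂ := length_sub_length_le_lev hγ hθ (x :: xs) ys
    have h₃ := length_sub_length_le_lev hγ hθ xs ys
    have hc : (0 : ℝ) ≤ if x = y then 0 else θ := by split_ifs <;> simp [hθ]
    rw [lev_cons_cons]
    simp only [List.length_cons] at h₁ h₂ ⊢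
    push_cast at h₁ h₂ ⊢
    refine le_min ?_ (le_min ?_ ?_) <;> nlinarith

theorem lev_le_of_length_le (hθ : 0 ≤ θ) :
    ∀ {u v : List A}, u.length ≤ v.length →
      lev γ θ u v ≤ θ * u.length + γ * ((v.length : ℝ) - u.length)
  | [], v, _ => by simp [lev_nil_left]
  | x :: xs, y :: ys, h => by
    have ih := lev_le_of_length_le hθ (Nat.le_of_succ_le_succ h)
    have hc : (if x = y then 0 else θ) ≤ θ := by split_ifs <;> simp [hθ]
    rw [lev_cons_cons]
    refine (min_le_right _ _).trans ((min_le_right _ _).trans ?_)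
    simp only [List.length_cons]
    push_cast
    linarith

theorem lev_le_cons_right (a : A) : ∀ u v : List A, lev γ θ u (a :: v) ≤ γ + lev γ θ u v
  | [], v => by
    simp only [lev_nil_left, List.length_cons]
    push_cast
    linarith
  | x :: xs, v => by
    rw [lev_cons_cons]
    exact (min_le_right _ _).trans (min_le_left _ _)

theorem lev_cons_cons_self_le (a : A) (u v : List A) :
    lev γ θ (a :: u) (a :: v) ≤ lev γ θ u v := by
  rw [lev_cons_cons]
  exact (min_le_right _ _).trans ((min_le_right _ _).trans (by simp))

theorem List.Sublist.lev_le {u v : List A} (h : u.Sublist v) :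
    lev γ θ u v ≤ γ * ((v.length : ℝ) - u.length) := by
  induction h with
  | slnil => simp [lev_nil_left]
  | cons a _ ih =>
    refine (lev_le_cons_right a _ _).trans ?_
    simp only [List.length_cons]
    push_cast
    linarith
  | cons_cons a _ ih =>
    refine (lev_cons_cons_self_le a _ _).trans ?_
    simpa using ih

theorem List.Sublist.lev_eq (hγ : 0 ≤ γ) (hθ : 0 ≤ θ) {u v : List A} (h : u.Sublist v) :
    lev γ θ u v = γ * ((v.length : ℝ) - u.length) :=
  le_antisymm h.lev_le (length_sub_length_le_lev hγ hθ u v)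

end Lev

theorem lev_triangle_defect_ge {A : Type*} [DecidableEq A] {θ : ℝ} (hθ₀ : 0 ≤ θ) (hθ₂ : θ ≤ 2)
    (u a b : List A) :
    (2 - θ) * min (lev 1 θ u a) (lev 1 θ u b) - 4 * u.length ≤
      lev 1 θ u a + lev 1 θ u b - lev 1 θ a b := by
  wlog hab : a.length ≤ b.length generalizing a b
  · have := this b a (le_of_not_ge hab)
    rwa [min_comm, lev_comm b a, add_comm (lev 1 θ u b)] at this
  have ha := length_sub_length_le_lev zero_le_one hθ₀ u a
  have hb := length_sub_length_le_lev zero_le_one hθ₀ u b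
  have hab' := lev_le_of_length_le (γ := 1) hθ₀ hab
  have hua := lev_le_length_add_length (γ := 1) (θ := θ) u a
  have hmin : (2 - θ) * min (lev 1 θ u a) (lev 1 θ u b) ≤ (2 - θ) * (a.length + u.length) := by
    refine mul_le_mul_of_nonneg_left ((min_le_left _ _).trans ?_) (by linarith)
    linarith
  have hu : 0 ≤ θ * u.length := by positivity
  -- the defect is at least `(2 - θ)|a| - 2|u|`, and `|a| ≥ lev u a - |u|`
  linarith

theorem lev_triangle_defect_ge_of_transitive {A : Type*} [DecidableEq A] {θ : ℝ}
    (hθ₀ : 0 ≤ θ) (hθ₂ : θ ≤ 2) {L : Set (List A)}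
    (htrans : ∀ u v : L, ∃ φ ∈ IsomGroup (lev 1 θ) L, φ u = v) {u₀ u v w : List A}
    (hu₀ : u₀ ∈ L) (hu : u ∈ L) (hv : v ∈ L) (hw : w ∈ L) :
    (2 - θ) * min (lev 1 θ v u) (lev 1 θ v w) - 4 * u₀.length ≤
      lev 1 θ v u + lev 1 θ v w - lev 1 θ u w := by
  obtain ⟨φ, hφ, hφv⟩ := htrans ⟨v, hv⟩ ⟨u₀, hu₀⟩
  have hiso : ∀ u v : L, lev 1 θ (φ u : List A) (φ v) = lev 1 θ (u : List A) v := hφ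
  have := lev_triangle_defect_ge hθ₀ hθ₂ (φ ⟨v, hv⟩ : List A) (φ ⟨u, hu⟩) (φ ⟨w, hw⟩)
  rwa [hiso, hiso, hiso, hφv] at this

theorem Set.Infinite.exists_sublist_chain {A : Type*} [Finite A] {L : Set (List A)}
    (hL : L.Infinite) :
    ∃ f : ℕ → List A, (∀ k, f k ∈ L) ∧ (∀ m k, m ≤ k → (f m).Sublist (f k)) ∧
      StrictMono fun k ↦ (f k).length := by
  let e := hL.natEmbedding
  have : IsPreorder (List A) (List.SublistForall₂ (· = ·)) := {}
  have higman := (Set.finite_univ (α := A)).partiallyWellOrderedOn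
    (r := (· = ·)) |>.partiallyWellOrderedOn_sublistForall₂
  obtain ⟨g, hg⟩ := higman.exists_monotone_subseq (f := fun k ↦ (e k : List A))
    fun _ _ _ ↦ Set.mem_univ _
  have hchain : ∀ m k, m ≤ k → (e (g m) : List A).Sublist (e (g k)) := by
    intro m k hmk
    obtain ⟨l, hl, hsub⟩ := List.sublistForall₂_iff.mp (hg m k hmk)
    rw [List.forall₂_eq_eq_eq] at hl
    rwa [hl]
  refine ⟨fun k ↦ e (g k), fun k ↦ (e (g k)).2, hchain, strictMono_nat_of_lt_succ fun k ↦ ?_⟩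
  refine (hchain k (k + 1) k.le_succ).length_le.lt_of_ne fun hlen ↦ ?_
  have := g.injective (e.injective (Subtype.ext ((hchain k (k + 1) k.le_succ).eq_of_length hlen)))
  omega

/-- For a finite alphabet `A`, `θ ∈ (0, 2)`, and a language `L ⊆ A*` on
which `Isom_θ(L)` acts transitively, `L` is finite. -/
theorem stmt_5 {A : Type*} [Fintype A] [DecidableEq A] (θ : ℝ)
    (hθ0 : 0 < θ) (hθ2 : θ < 2) (L : Set (List A))
    (htrans : ∀ u v : L, ∃ φ ∈ IsomGroup (lev 1 θ) L, φ u = v) :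
    L.Finite := by
  by_contra hinf
  obtain ⟨u₀, hu₀⟩ := Set.Infinite.nonempty hinf
  obtain ⟨f, hfL, hchain, hlen⟩ := Set.Infinite.exists_sublist_chain hinf
  obtain ⟨G, hG⟩ := exists_nat_gt (4 * u₀.length / (2 - θ))
  have hdefect := lev_triangle_defect_ge_of_transitive hθ0.le hθ2.le htrans hu₀
    (hfL 0) (hfL G) (hfL (G + G))
  rw [lev_comm, (hchain 0 G G.zero_le).lev_eq zero_le_one hθ0.le,
    (hchain G (G + G) (by omega)).lev_eq zero_le_one hθ0.le,
    (hchain 0 (G + G) (by omega)).lev_eq zero_le_one hθ0.le] at hdefect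
  simp only [one_mul] at hdefect
  have hgap₁ : G + (f 0).length ≤ (f G).length := hlen.add_le_nat G 0
  have hgap₂ : G + (f G).length ≤ (f (G + G)).length := hlen.add_le_nat G G
  have hmin : (G : ℝ) ≤ min ((f G).length - (f 0).length : ℝ)
      ((f (G + G)).length - (f G).length) :=
    le_min (le_sub_iff_add_le.mpr (mod_cast hgap₁)) (le_sub_iff_add_le.mpr (mod_cast hgap₂))
  have hG' : 4 * (u₀.length : ℝ) < (2 - θ) * G := (div_lt_iff₀' (by linarith)).mp hG
  have := mul_le_mul_of_nonneg_left hmin (by linarith : (0 : ℝ) ≤ 2 - θ)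
  linarith
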